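/- Rate of convergence at training nodes: with distinct nodes β₁,…,βₙ in ℝᵐ, kernel K(x,y) = ‖x−y‖², and δ = min_{k≠i} K(βᵢ, β_k) > 0, the error of the normalized predictor at node βᵢ satisfies |f_pred(βᵢ, τ) − f(βᵢ)| ≤ 2·(n−1)·e^{−τδ}·max_k |f(β_k)| for all τ > 0. -/
import Mathlib


theorem stmt_16 (m n : ℕ) [NeZero n] (β : Fin n → EuclideanSpace ℝ (Fin m))
    (hβ : Function.Injective β) (f : EuclideanSpace ℝ (Fin m) → ℝ)
    (K : EuclideanSpace ℝ (Fin m) → EuclideanSpace ℝ (Fin m) → ℝ)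
    (hK : ∀ x y, K x y = ‖x - y‖ ^ 2)
    (i : Fin n) (hne : (Finset.univ.erase i).Nonempty) (δ : ℝ)
    (hδ : δ = (Finset.univ.erase i).inf' hne (fun k => K (β i) (β k)))
    (fpred : EuclideanSpace ℝ (Fin m) → ℝ → ℝ)
    (hfpred : ∀ x τ, fpred x τ =
      (∑ k, f (β k) * Real.exp (-τ * K x (β k))) /
        ∑ k, Real.exp (-τ * K x (β k)))
    (τ : ℝ) (hτ : 0 < τ) :
    0 < δ ∧
    |fpred (β i) τ - f (β i)| ≤
      2 * ((n : ℝ) - 1) * Real.exp (-τ * δ) *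
        Finset.univ.sup' Finset.univ_nonempty (fun k => |f (β k)|) := by
  have hδpos : 0 < δ := by
    rw [hδ, Finset.lt_inf'_iff]
    intro k hk
    have hki : β i ≠ β k := fun h => (Finset.mem_erase.mp hk).1 (hβ h).symm
    rw [hK]
    exact pow_pos (norm_pos_iff.mpr (sub_ne_zero.mpr hki)) 2
  refine ⟨hδpos, ?_⟩
  set w : Fin n → ℝ := fun k => Real.exp (-τ * K (β i) (β k)) with hw
  set S : ℝ := ∑ k, w k with hSdef
  have hwpos : ∀ k, 0 < w k := fun k => Real.exp_pos _
  have hwi : w i = 1 := by simp [hw, hK]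
  have hSge1 : 1 ≤ S := by
    rw [← hwi]
    exact Finset.single_le_sum (fun k _ => (hwpos k).le) (Finset.mem_univ i)
  have hSpos : 0 < S := lt_of_lt_of_le one_pos hSge1
  set M : ℝ := Finset.univ.sup' Finset.univ_nonempty (fun k => |f (β k)|) with hM
  have hMle : ∀ k, |f (β k)| ≤ M := fun k => Finset.le_sup' (fun k => |f (β k)|) (Finset.mem_univ k)
  have hMnn : 0 ≤ M := le_trans (abs_nonneg _) (hMle i)
  have key : fpred (β i) τ - f (β i) = (∑ k, (f (β k) - f (β i)) * w k) / S := by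
    have h1 : ∑ k, (f (β k) - f (β i)) * w k
        = (∑ k, f (β k) * w k) - f (β i) * S := by
      simp [sub_mul, Finset.sum_sub_distrib, Finset.mul_sum, hSdef]
    rw [hfpred, h1, sub_div, mul_div_assoc, div_self hSpos.ne', mul_one]
  have herase : ∑ k, (f (β k) - f (β i)) * w k
      = ∑ k ∈ Finset.univ.erase i, (f (β k) - f (β i)) * w k := by
    rw [Finset.sum_erase]
    simp
  have hbound : ∀ k ∈ Finset.univ.erase i,
      |(f (β k) - f (β i)) * w k| ≤ 2 * M * Real.exp (-τ * δ) := by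
    intro k hk
    have hKge : δ ≤ K (β i) (β k) := hδ ▸ Finset.inf'_le _ hk
    have hwle : w k ≤ Real.exp (-τ * δ) := by
      apply Real.exp_le_exp.mpr
      nlinarith
    rw [abs_mul, abs_of_pos (hwpos k)]
    have h2M : |f (β k) - f (β i)| ≤ 2 * M := by
      calc |f (β k) - f (β i)| ≤ |f (β k)| + |f (β i)| := abs_sub _ _
        _ ≤ M + M := add_le_add (hMle k) (hMle i)
        _ = 2 * M := by ring
    exact mul_le_mul h2M hwle (hwpos k).le (by positivity)
  have hcard : ((Finset.univ.erase i).card : ℝ) = (n : ℝ) - 1 := by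
    rw [Finset.card_erase_of_mem (Finset.mem_univ i), Finset.card_univ, Fintype.card_fin]
    rw [Nat.cast_sub (NeZero.one_le)]
    simp
  have hnum : |∑ k, (f (β k) - f (β i)) * w k|
      ≤ 2 * ((n : ℝ) - 1) * Real.exp (-τ * δ) * M := by
    calc |∑ k, (f (β k) - f (β i)) * w k|
        = |∑ k ∈ Finset.univ.erase i, (f (β k) - f (β i)) * w k| := by rw [herase]
      _ ≤ ∑ k ∈ Finset.univ.erase i, |(f (β k) - f (β i)) * w k| :=
          Finset.abs_sum_le_sum_abs _ _
      _ ≤ ∑ _k ∈ Finset.univ.erase i, 2 * M * Real.exp (-τ * δ) :=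
          Finset.sum_le_sum hbound
      _ = ((Finset.univ.erase i).card : ℝ) * (2 * M * Real.exp (-τ * δ)) := by
          rw [Finset.sum_const, nsmul_eq_mul]
      _ = 2 * ((n : ℝ) - 1) * Real.exp (-τ * δ) * M := by rw [hcard]; ring
  calc |fpred (β i) τ - f (β i)|
      = |∑ k, (f (β k) - f (β i)) * w k| / S := by rw [key, abs_div, abs_of_pos hSpos]
    _ ≤ |∑ k, (f (β k) - f (β i)) * w k| := div_le_self (abs_nonneg _) hSge1
    _ ≤ 2 * ((n : ℝ) - 1) * Real.exp (-τ * δ) * M := hnum
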